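/- Exactly nine deterministic 1-bit strategies avoid the DMH' forbidden entries, namely those with row patterns (e1,e3,e1,e3), (e3,e3,e1,e3), (e1,e4,e1,e4), (e2,e2,e2,e3), (e2,e3,e2,e3), (e3,e2,e2,e3), (e3,e3,e2,e3), (e2,e2,e2,e4), (e2,e4,e2,e4), and each has expected payoff ≤ 0. -/
import Mathlib

def detStrategy (E : Fin 4 → Fin 2) (D : Fin 2 → Fin 4) : Fin 4 → Fin 4 → ℝ :=
  fun m z => if D (E m) = z then 1 else 0

def dmh'Forbidden : Finset (Fin 4 × Fin 4) :=
  {(0,3), (1,0), (2,2), (2,3), (3,0), (3,1)}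

noncomputable def dmh'Payoff (S : Fin 4 → Fin 4 → ℝ) : ℝ :=
  (1/4) * (-(S 0 0) - S 1 2 + S 2 0)

def rowStrategy (r : Fin 4 → Fin 4) : Fin 4 → Fin 4 → ℝ :=
  fun m z => if z = r m then 1 else 0

lemma rs_eq (E : Fin 4 → Fin 2) (D : Fin 2 → Fin 4) :
    detStrategy E D = rowStrategy (fun m => D (E m)) := by
  funext m z; simp [detStrategy, rowStrategy, eq_comm]

lemma safe_iff (r : Fin 4 → Fin 4) :
    (∀ p ∈ dmh'Forbidden, rowStrategy r p.1 p.2 = 0) ↔ ∀ p ∈ dmh'Forbidden, p.2 ≠ r p.1 := by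
  constructor
  · intro h p hp he
    have := h p hp
    rw [rowStrategy, if_pos he] at this
    exact one_ne_zero this
  · intro h p hp
    rw [rowStrategy, if_neg (h p hp)]

lemma enum : ∀ (E : Fin 4 → Fin 2) (D : Fin 2 → Fin 4),
    (∀ p ∈ dmh'Forbidden, p.2 ≠ D (E p.1)) →
    (fun m => D (E m)) = ![0,2,0,2] ∨ (fun m => D (E m)) = ![2,2,0,2] ∨
    (fun m => D (E m)) = ![0,3,0,3] ∨ (fun m => D (E m)) = ![1,1,1,2] ∨
    (fun m => D (E m)) = ![1,2,1,2] ∨ (fun m => D (E m)) = ![2,1,1,2] ∨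
    (fun m => D (E m)) = ![2,2,1,2] ∨ (fun m => D (E m)) = ![1,1,1,3] ∨
    (fun m => D (E m)) = ![1,3,1,3] := by decide

lemma mem_aux (v : Fin 4 → Fin 4) (E : Fin 4 → Fin 2) (D : Fin 2 → Fin 4)
    (hv : (fun m => D (E m)) = v) (hf : ∀ p ∈ dmh'Forbidden, p.2 ≠ v p.1) :
    ∃ E' D', rowStrategy v = detStrategy E' D' ∧
      ∀ p ∈ dmh'Forbidden, rowStrategy v p.1 p.2 = 0 :=
  ⟨E, D, by rw [rs_eq, hv], (safe_iff v).mpr hf⟩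

/-- exactly nine deterministic 1-bit strategies avoid the DMH'
forbidden entries — those with row patterns (e1,e3,e1,e3), (e3,e3,e1,e3),
(e1,e4,e1,e4), (e2,e2,e2,e3), (e2,e3,e2,e3), (e3,e2,e2,e3), (e3,e3,e2,e3),
(e2,e2,e2,e4), (e2,e4,e2,e4) — and each has expected payoff ≤ 0. -/
theorem dmh'_safe_deterministic_strategies :
    ({s | ∃ E D, s = detStrategy E D ∧ ∀ p ∈ dmh'Forbidden, s p.1 p.2 = 0} :
        Set (Fin 4 → Fin 4 → ℝ)) =
      {rowStrategy ![0,2,0,2], rowStrategy ![2,2,0,2], rowStrategy ![0,3,0,3],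
        rowStrategy ![1,1,1,2], rowStrategy ![1,2,1,2], rowStrategy ![2,1,1,2],
        rowStrategy ![2,2,1,2], rowStrategy ![1,1,1,3], rowStrategy ![1,3,1,3]} ∧
    (∀ r ∈ ({![0,2,0,2], ![2,2,0,2], ![0,3,0,3], ![1,1,1,2], ![1,2,1,2],
        ![2,1,1,2], ![2,2,1,2], ![1,1,1,3], ![1,3,1,3]} : Set (Fin 4 → Fin 4)),
      dmh'Payoff (rowStrategy r) ≤ 0) := by
  constructor
  · ext s
    simp only [Set.mem_setOf_eq, Set.mem_insert_iff, Set.mem_singleton_iff]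
    constructor
    · rintro ⟨E, D, rfl, h⟩
      rw [rs_eq] at h ⊢
      have h' := (safe_iff _).mp h
      rcases enum E D h' with h|h|h|h|h|h|h|h|h <;> rw [h] <;> tauto
    · rintro (rfl|rfl|rfl|rfl|rfl|rfl|rfl|rfl|rfl)
      · exact mem_aux _ ![0,1,0,1] ![0,2] (by decide) (by decide)
      · exact mem_aux _ ![0,0,1,0] ![2,0] (by decide) (by decide)
      · exact mem_aux _ ![0,1,0,1] ![0,3] (by decide) (by decide)
      · exact mem_aux _ ![0,0,0,1] ![1,2] (by decide) (by decide)
      · exact mem_aux _ ![0,1,0,1] ![1,2] (by decide) (by decide)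
      · exact mem_aux _ ![0,1,1,0] ![2,1] (by decide) (by decide)
      · exact mem_aux _ ![0,0,1,0] ![2,1] (by decide) (by decide)
      · exact mem_aux _ ![0,0,0,1] ![1,3] (by decide) (by decide)
      · exact mem_aux _ ![0,1,0,1] ![1,3] (by decide) (by decide)
  · intro r hr
    simp only [Set.mem_insert_iff, Set.mem_singleton_iff] at hr
    rcases hr with rfl|rfl|rfl|rfl|rfl|rfl|rfl|rfl|rfl <;>
      simp only [dmh'Payoff, rowStrategy, Matrix.cons_val_zero, Matrix.cons_val_one,
        Matrix.head_cons, Matrix.cons_val_two, Matrix.tail_cons,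
        show ((0:Fin 4) = 2) = False from by decide, show ((2:Fin 4) = 2) = True from by decide,
        show ((0:Fin 4) = 0) = True from by decide, show ((2:Fin 4) = 0) = False from by decide,
        show ((0:Fin 4) = 1) = False from by decide, show ((2:Fin 4) = 1) = False from by decide,
        show ((2:Fin 4) = 3) = False from by decide, if_true, if_false] <;> norm_num
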